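/- Let M̃ = (r,s,u) be a triangular fuzzy number with r < s < u and α ∈ [1/2, 1]. Then Cr(M̃ ≤ b) ≥ α holds if and only if the upper endpoint of the 2(1−α)-cut of M̃ is at most b: (M̃)_{2(1−α)}^U ≤ b. -/

import Mathlib

/-- Credibility distribution Cr(M ≤ b) of the triangular fuzzy number (r,s,u). -/
noncomputable def crLe (r s u b : ℝ) : ℝ :=
  if b ≤ r then 0
  else if b ≤ s then (b - r) / (2 * (s - r))
  else if b ≤ u then (b - 2 * s + u) / (2 * (u - s))
  else 1

/-! Below the peak `s` the credibility stays under `1/2 ≤ α`, above `u` it is `1 ≥ α`, and on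
`[s, u]` it is the affine function `1/2 + (b - s) / (2 (u - s))`, whose `α`-level is exactly the
upper endpoint `s + (2α - 1)(u - s)` of the `2(1 - α)`-cut; that endpoint lies in `[s, u]`. -/

section

variable {r s u b : ℝ}

theorem crLe_lt_half (hrs : r < s) (hbs : b < s) : crLe r s u b < 1 / 2 := by
  unfold crLe
  by_cases hbr : b ≤ r
  · rw [if_pos hbr]
    norm_num
  · rw [if_neg hbr, if_pos hbs.le, div_lt_iff₀ (mul_pos two_pos (sub_pos.2 hrs))]
    linarith

theorem crLe_eq_of_mem_Icc (hrs : r < s) (hsu : s < u) (hb : b ∈ Set.Icc s u) :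
    crLe r s u b = (b - 2 * s + u) / (2 * (u - s)) := by
  obtain ⟨hsb, hbu⟩ := hb
  have hbr : ¬b ≤ r := by linarith
  unfold crLe
  by_cases hbs : b ≤ s
  · have hb : b = s := le_antisymm hbs hsb
    subst hb
    rw [if_neg hbr, if_pos le_rfl]
    field_simp [(sub_pos.2 hrs).ne', (sub_pos.2 hsu).ne']
    ring
  · rw [if_neg hbr, if_neg hbs, if_pos hbu]

theorem crLe_eq_one (hrs : r ≤ s) (hsu : s ≤ u) (hub : u < b) : crLe r s u b = 1 := by
  unfold crLe
  rw [if_neg (by linarith), if_neg (by linarith), if_neg (by linarith)]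

theorem le_affine_credibility_iff (α : ℝ) (hsu : s < u) :
    α ≤ (b - 2 * s + u) / (2 * (u - s)) ↔ u - 2 * (1 - α) * (u - s) ≤ b := by
  rw [le_div_iff₀ (by linarith)]
  constructor <;> intro h <;> linarith

theorem cutUpper_mem_Icc {α : ℝ} (hsu : s ≤ u) (hα : α ∈ Set.Icc (1 / 2 : ℝ) 1) :
    u - 2 * (1 - α) * (u - s) ∈ Set.Icc s u := by
  obtain ⟨hα₁, hα₂⟩ := hα
  constructor <;> nlinarith

end

theorem crLe_ge_alpha_iff_cut (r s u : ℝ) (hrs : r < s) (hsu : s < u)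
    (α : ℝ) (hα : α ∈ Set.Icc (1 / 2 : ℝ) 1) :
    ∀ b : ℝ, α ≤ crLe r s u b ↔ u - 2 * (1 - α) * (u - s) ≤ b := by
  intro b
  obtain ⟨hcut_ge, hcut_le⟩ := cutUpper_mem_Icc hsu.le hα
  rcases lt_or_ge b s with hbs | hsb
  · have hcr := crLe_lt_half (u := u) hrs hbs
    exact iff_of_false (by linarith [hα.1]) (by linarith)
  rcases le_or_gt b u with hbu | hub
  · rw [crLe_eq_of_mem_Icc hrs hsu ⟨hsb, hbu⟩]
    exact le_affine_credibility_iff α hsu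
  · rw [crLe_eq_one hrs.le hsu.le hub]
    exact iff_of_true hα.2 (by linarith)
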